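/- sup_p τ_p^{1/p} = √(2k-1)/k, where τ_p is the probability that a uniform random word of length p over 2k letters represents the identity in the free group F_k. In particular for k = 2 this spectral radius equals √3/2. -/

import Mathlib

abbrev Letter (k : ℕ) := Fin k × Bool

/-- `τ_p`: the probability that a uniformly random word of length `p` over the `2k`-letter
alphabet represents the identity of the free group `F_k`. -/
noncomputable def tau (k p : ℕ) : ℝ :=
  (Nat.card {w : Fin p → Letter k // FreeGroup.mk (List.ofFn w) = 1}) / (2 * k) ^ p

/-!
Write `|w|` for the length of the reduced form of a word `w`. Summing `g |w|` over the words of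
length `n + 1` is the same as summing `radialOp k g |w|` over the words of length `n`, because
prepending a letter to a nonempty reduced word cancels it for exactly one of the `2k` letters and
lengthens it for the other `2k - 1`.

For the upper bound, `g h = (2k - 1) ^ (-h / 2)` satisfies `radialOp k g ≤ 2 √(2k - 1) g`, so at
most `(2 √(2k - 1)) ^ p` words of length `p` reduce to the identity. For the lower bound, ballot numbers
weighted by `(2k - 1)` per up-step are a subsolution of the recursion for the number of words of
length `n` and reduced length `h`; at `(2m, 0)` they give `C(2m, m) (2k - 1) ^ m / (m + 1)` identity
words, and this polynomial loss disappears under the `p`-th root.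
-/

open Finset FreeGroup Filter Topology

lemma sum_pi_fin_succ {β M : Type*} [Fintype β] [AddCommMonoid M] {n : ℕ}
    (f : (Fin (n + 1) → β) → M) : ∑ w, f w = ∑ x, ∑ w : Fin n → β, f (Fin.cons x w) := by
  rw [← (Fin.consEquiv fun _ => β).sum_comp, Fintype.sum_prod_type]
  rfl

lemma iSup_rpow_one_div_eq_of_bounds {a : ℕ → ℝ} {L : ℝ} (hL : 0 ≤ L) (ha : ∀ p, 0 ≤ a p)
    (hle : ∀ p, a p ≤ L ^ p) (hge : ∃ᶠ p : ℕ in atTop, L ^ p / (p : ℝ) ^ 2 ≤ a p) :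
    ⨆ p : ℕ+, a p ^ ((1 : ℝ) / p) = L := by
  have hroot : ∀ p : ℕ, 0 < p → (L ^ p) ^ ((1 : ℝ) / p) = L := fun p hp => by
    rw [← Real.rpow_natCast, ← Real.rpow_mul hL, mul_one_div_cancel (by positivity), Real.rpow_one]
  have hupper : ∀ p : ℕ+, a p ^ ((1 : ℝ) / p) ≤ L := fun p =>
    (Real.rpow_le_rpow (ha p) (hle p) (by positivity)).trans_eq (hroot p p.pos)
  refine le_antisymm (ciSup_le hupper) ?_
  have hbdd : BddAbove (Set.range fun p : ℕ+ => a p ^ ((1 : ℝ) / p)) :=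
    ⟨L, Set.forall_mem_range.2 hupper⟩
  have htend : Tendsto (fun p : ℕ => L / ((p : ℝ) ^ ((1 : ℝ) / p)) ^ 2) atTop (𝓝 L) := by
    have h := (tendsto_const_nhds : Tendsto (fun _ : ℕ => L) atTop (𝓝 L)).div
      ((tendsto_rpow_div.comp tendsto_natCast_atTop_atTop).pow 2) (by norm_num : (1 : ℝ) ^ 2 ≠ 0)
    rwa [one_pow, div_one] at h
  refine le_of_tendsto_of_frequently htend ((hge.and_eventually (eventually_gt_atTop 0)).mono ?_)
  rintro p ⟨hp, hp0⟩
  calc L / ((p : ℝ) ^ ((1 : ℝ) / p)) ^ 2 = (L ^ p / (p : ℝ) ^ 2) ^ ((1 : ℝ) / p) := by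
        rw [Real.div_rpow (by positivity) (by positivity), hroot p hp0, ← Real.rpow_natCast,
          ← Real.rpow_natCast, ← Real.rpow_mul (by positivity), ← Real.rpow_mul (by positivity),
          mul_comm]
    _ ≤ a p ^ ((1 : ℝ) / p) := Real.rpow_le_rpow (by positivity) hp (by positivity)
    _ ≤ ⨆ p : ℕ+, a p ^ ((1 : ℝ) / p) := le_ciSup hbdd ⟨p, hp0⟩

/-- The number of lattice paths from `0` to `h` with `h + j` up-steps and `j` down-steps that
never go below `0`. -/
def ballot (j h : ℕ) : ℝ := (h + 2 * j).choose (h + j) - (h + 2 * j).choose (h + j + 1)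

@[simp]
lemma ballot_zero_left (h : ℕ) : ballot 0 h = 1 := by
  simp [ballot]

lemma ballot_succ_zero (j : ℕ) : ballot (j + 1) 0 = ballot j 1 := by
  have h₁ := Nat.choose_succ_succ' (2 * j + 1) j
  have h₂ := Nat.choose_succ_succ' (2 * j + 1) (j + 1)
  have h₃ := Nat.choose_symm_half j
  simp only [ballot, zero_add, add_comm 1]
  rw [show 2 * (j + 1) = 2 * j + 1 + 1 by ring, h₁, h₂, h₃]
  push_cast
  ring

lemma ballot_succ_succ (j h : ℕ) :
    ballot (j + 1) (h + 1) = ballot (j + 1) h + ballot j (h + 2) := by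
  have h₁ := Nat.choose_succ_succ' (h + 2 * j + 2) (h + j + 1)
  have h₂ := Nat.choose_succ_succ' (h + 2 * j + 2) (h + j + 2)
  simp only [ballot]
  rw [show h + 1 + 2 * (j + 1) = h + 2 * j + 2 + 1 by ring,
    show h + 1 + (j + 1) = h + j + 1 + 1 by ring, show h + 2 * (j + 1) = h + 2 * j + 2 by ring,
    show h + (j + 1) = h + j + 1 by ring, show h + 2 + 2 * j = h + 2 * j + 2 by ring,
    show h + 2 + j = h + j + 2 by ring, h₁, h₂]
  push_cast
  ring

lemma succ_mul_ballot_zero (m : ℕ) : (m + 1) * ballot m 0 = m.centralBinom := by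
  have h := Nat.choose_succ_right_eq (2 * m) m
  rw [show 2 * m - m = m by omega] at h
  have h' : ((2 * m).choose (m + 1) : ℝ) * (m + 1) = (2 * m).choose m * m := by
    exact_mod_cast h
  simp only [ballot, zero_add, Nat.centralBinom_eq_two_mul_choose]
  linear_combination -h'

lemma four_pow_div_sq_le_ballot {m : ℕ} (hm : 0 < m) :
    (4 : ℝ) ^ m / ((2 * m : ℕ) : ℝ) ^ 2 ≤ ballot m 0 := by
  have h4 : ((4 ^ m : ℕ) : ℝ) ≤ ((2 * m * m.centralBinom : ℕ) : ℝ) :=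
    Nat.cast_le.2 (Nat.four_pow_le_two_mul_self_mul_centralBinom m hm)
  have hm1 : (1 : ℝ) ≤ m := Nat.one_le_cast.2 hm
  rw [eq_div_of_mul_eq (by positivity) ((mul_comm _ _).trans (succ_mul_ballot_zero m)),
    div_le_div_iff₀ (by positivity) (by positivity)]
  push_cast at h4 ⊢
  calc (4 : ℝ) ^ m * (m + 1) ≤ (2 * m * m.centralBinom) * (2 * m) :=
        mul_le_mul h4 (by linarith) (by positivity) (by positivity)
    _ = m.centralBinom * (2 * m) ^ 2 := by ring

/-- `radialOp k g |v| = ∑ x, g |x :: v|` for every reduced word `v` over `k` generators. -/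
def radialOp (k : ℕ) (g : ℕ → ℝ) : ℕ → ℝ
  | 0 => 2 * k * g 1
  | h + 1 => (2 * k - 1) * g (h + 2) + g h

section

variable {α : Type*} [DecidableEq α]

lemma FreeGroup.reduce_cons_of_reduce_eq_cons {L t : List (α × Bool)} {y : α × Bool}
    (hL : reduce L = y :: t) (x : α × Bool) :
    reduce (x :: L) = if x = (y.1, !y.2) then t else x :: y :: t := by
  rw [reduce.cons, hL]
  simp only [Prod.ext_iff]

lemma FreeGroup.sum_reduce_cons_length [Fintype α] (L : List (α × Bool)) (g : ℕ → ℝ) :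
    ∑ x, g (reduce (x :: L)).length = radialOp (Fintype.card α) g (reduce L).length := by
  rcases hL : reduce L with _ | ⟨y, t⟩
  · simp only [reduce.cons, hL, List.length_singleton, List.length_nil, sum_const, card_univ,
      radialOp, Fintype.card_prod, Fintype.card_bool, nsmul_eq_mul]
    push_cast
    ring
  · simp_rw [reduce_cons_of_reduce_eq_cons hL, apply_ite, List.length_cons]
    rw [Fintype.sum_eq_add_sum_compl (y.1, !y.2), if_pos rfl, sum_ite_of_false (by simp)]
    have : 1 ≤ Fintype.card α * 2 := by linarith [Fintype.card_pos_iff.2 ⟨y.1⟩]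
    simp [radialOp, card_compl, Fintype.card_prod, Nat.cast_sub this]
    ring

end

section

variable (α : Type*) [Fintype α] [DecidableEq α]

noncomputable def lengthSum (n : ℕ) (g : ℕ → ℝ) : ℝ :=
  ∑ w : Fin n → α × Bool, g (reduce (List.ofFn w)).length

variable {α}

@[simp]
lemma lengthSum_zero (g : ℕ → ℝ) : lengthSum α 0 g = g 0 := by
  simp [lengthSum]

lemma lengthSum_succ (n : ℕ) (g : ℕ → ℝ) :
    lengthSum α (n + 1) g = lengthSum α n (radialOp (Fintype.card α) g) := by
  rw [lengthSum, sum_pi_fin_succ, Finset.sum_comm]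
  simp_rw [List.ofFn_cons, sum_reduce_cons_length]
  rfl

lemma lengthSum_mono {n : ℕ} {g g' : ℕ → ℝ} (h : g ≤ g') :
    lengthSum α n g ≤ lengthSum α n g' :=
  sum_le_sum fun _ _ => h _

lemma lengthSum_nonneg {n : ℕ} {g : ℕ → ℝ} (h : 0 ≤ g) : 0 ≤ lengthSum α n g :=
  sum_nonneg fun _ _ => h _

lemma lengthSum_add (n : ℕ) (g g' : ℕ → ℝ) :
    lengthSum α n (g + g') = lengthSum α n g + lengthSum α n g' :=
  sum_add_distrib

lemma lengthSum_const_mul (n : ℕ) (c : ℝ) (g : ℕ → ℝ) :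
    lengthSum α n (c • g) = c * lengthSum α n g := by
  simp [lengthSum, mul_sum]

lemma radialOp_inv_pow_le {k : ℕ} {q : ℝ} (hq : 0 < q) (hqk : q ^ 2 = 2 * k - 1) (h : ℕ) :
    radialOp k (q⁻¹ ^ ·) h ≤ 2 * q * q⁻¹ ^ h := by
  cases h with
  | zero =>
    have hk : (1 : ℝ) ≤ k := by
      rcases Nat.eq_zero_or_pos k with rfl | hk
      · norm_num at hqk
        nlinarith [pow_pos hq 2]
      · exact Nat.one_le_cast.2 hk
    simp only [radialOp, pow_one, pow_zero, mul_one]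
    rw [← div_eq_mul_inv, div_le_iff₀ hq]
    nlinarith
  | succ h =>
    simp only [radialOp]
    have hq' : q * q⁻¹ = 1 := mul_inv_cancel₀ hq.ne'
    rw [← hqk]
    apply le_of_eq
    linear_combination (q⁻¹ ^ h * (q * q⁻¹ + 1) - 2 * q⁻¹ ^ h) * hq'

lemma lengthSum_inv_pow_le {q : ℝ} (hq : 0 < q) (hqk : q ^ 2 = 2 * Fintype.card α - 1) (n : ℕ) :
    lengthSum α n (q⁻¹ ^ ·) ≤ (2 * q) ^ n := by
  induction n with
  | zero => simp
  | succ n ih =>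
    calc lengthSum α (n + 1) (q⁻¹ ^ ·)
        ≤ lengthSum α n ((2 * q) • (q⁻¹ ^ ·)) :=
          (lengthSum_succ n _).trans_le (lengthSum_mono (radialOp_inv_pow_le hq hqk))
      _ ≤ (2 * q) ^ (n + 1) := by
        rw [lengthSum_const_mul, pow_succ']
        gcongr

lemma lengthSum_single_zero_le {q : ℝ} (hq : 0 < q) (hqk : q ^ 2 = 2 * Fintype.card α - 1)
    (n : ℕ) : lengthSum α n (Pi.single 0 1) ≤ (2 * q) ^ n := by
  refine (lengthSum_mono fun h => ?_).trans (lengthSum_inv_pow_le hq hqk n)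
  cases h <;> simp
  positivity

lemma lengthSum_succ_single_zero (n : ℕ) :
    lengthSum α (n + 1) (Pi.single 0 1) = lengthSum α n (Pi.single 1 1) := by
  rw [lengthSum_succ]
  congr 1
  funext h
  cases h <;> simp [radialOp, Pi.single_apply]

lemma le_lengthSum_succ_single_succ (n h : ℕ) :
    (2 * Fintype.card α - 1) * lengthSum α n (Pi.single h 1) +
        lengthSum α n (Pi.single (h + 2) 1) ≤ lengthSum α (n + 1) (Pi.single (h + 1) 1) := by
  rw [lengthSum_succ, ← lengthSum_const_mul, ← lengthSum_add]
  refine lengthSum_mono fun i => ?_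
  cases i with
  | zero => rcases h with _ | h <;> simp [radialOp]
  | succ i => simp [radialOp, Pi.single_apply]

lemma ballot_mul_pow_le_lengthSum [Nonempty α] (j h : ℕ) :
    ballot j h * (2 * Fintype.card α - 1) ^ (h + j) ≤ lengthSum α (h + 2 * j) (Pi.single h 1) := by
  set w : ℝ := 2 * Fintype.card α - 1
  have hw : 0 ≤ w := by
    have : (1 : ℝ) ≤ Fintype.card α := Nat.one_le_cast.2 Fintype.card_pos
    linarith
  induction j generalizing h with
  | zero =>
    induction h with
    | zero => simp
    | succ h ih =>
      calc ballot 0 (h + 1) * w ^ (h + 1 + 0) = w * (ballot 0 h * w ^ (h + 0)) + 0 := by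
            simp [pow_succ']
        _ ≤ w * lengthSum α h (Pi.single h 1) + lengthSum α h (Pi.single (h + 2) 1) := by
            gcongr
            · simpa using ih
            · exact lengthSum_nonneg (Pi.single_nonneg.2 zero_le_one)
        _ ≤ lengthSum α (h + 1 + 2 * 0) (Pi.single (h + 1) 1) := le_lengthSum_succ_single_succ h h
  | succ j ihj =>
    induction h with
    | zero =>
      rw [ballot_succ_zero, show 0 + 2 * (j + 1) = 1 + 2 * j + 1 by ring,
        lengthSum_succ_single_zero, show 0 + (j + 1) = 1 + j by ring]
      exact ihj 1
    | succ h ih =>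
      calc ballot (j + 1) (h + 1) * w ^ (h + 1 + (j + 1))
          = w * (ballot (j + 1) h * w ^ (h + (j + 1))) + ballot j (h + 2) * w ^ (h + 2 + j) := by
            rw [ballot_succ_succ]
            ring
        _ ≤ w * lengthSum α (h + 2 * (j + 1)) (Pi.single h 1)
            + lengthSum α (h + 2 * (j + 1)) (Pi.single (h + 2) 1) := by
            refine add_le_add (mul_le_mul_of_nonneg_left ih hw) ?_
            simpa only [show h + 2 + 2 * j = h + 2 * (j + 1) by ring] using ihj (h + 2)
        _ ≤ lengthSum α (h + 1 + 2 * (j + 1)) (Pi.single (h + 1) 1) := by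
            rw [show h + 1 + 2 * (j + 1) = h + 2 * (j + 1) + 1 by ring]
            exact le_lengthSum_succ_single_succ _ h

end

lemma tau_eq_lengthSum (k p : ℕ) :
    tau k p = lengthSum (Fin k) p (Pi.single 0 1) / (2 * k) ^ p := by
  rw [tau, lengthSum, Nat.card_eq_fintype_card, Fintype.card_subtype]
  simp only [Pi.single_apply, sum_boole, List.length_eq_zero_iff, ← toWord_mk,
    toWord_eq_nil_iff]

lemma tau_nonneg (k p : ℕ) : 0 ≤ tau k p := by
  unfold tau
  positivity

lemma tau_le_pow {k : ℕ} (hk : 1 ≤ k) (p : ℕ) : tau k p ≤ (√(2 * k - 1) / k) ^ p := by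
  have hk' : (1 : ℝ) ≤ k := Nat.one_le_cast.2 hk
  have hq : 0 < √(2 * (k : ℝ) - 1) := Real.sqrt_pos.2 (by linarith)
  rw [tau_eq_lengthSum, ← mul_div_mul_left (√(2 * (k : ℝ) - 1)) k two_ne_zero, div_pow]
  gcongr
  refine lengthSum_single_zero_le hq ?_ p
  rw [Real.sq_sqrt (by linarith), Fintype.card_fin]

lemma pow_div_sq_le_tau {k : ℕ} (hk : 1 ≤ k) {m : ℕ} (hm : 0 < m) :
    (√(2 * k - 1) / k) ^ (2 * m) / ((2 * m : ℕ) : ℝ) ^ 2 ≤ tau k (2 * m) := by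
  have hk' : (1 : ℝ) ≤ k := Nat.one_le_cast.2 hk
  have : Nonempty (Fin k) := ⟨⟨0, hk⟩⟩
  have hlow := ballot_mul_pow_le_lengthSum (α := Fin k) m 0
  rw [zero_add, zero_add, Fintype.card_fin] at hlow
  rw [tau_eq_lengthSum]
  calc (√(2 * k - 1) / k) ^ (2 * m) / ((2 * m : ℕ) : ℝ) ^ 2
      = (4 : ℝ) ^ m / ((2 * m : ℕ) : ℝ) ^ 2 * (2 * k - 1) ^ m / (2 * k) ^ (2 * m) := by
        rw [div_pow, pow_mul, pow_mul, pow_mul, Real.sq_sqrt (by linarith), mul_pow]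
        field_simp
        ring
    _ ≤ ballot m 0 * (2 * k - 1) ^ m / (2 * k) ^ (2 * m) := by
        have := pow_nonneg (by linarith : (0 : ℝ) ≤ 2 * k - 1) m
        gcongr
        exact four_pow_div_sq_le_ballot hm
    _ ≤ lengthSum (Fin k) (2 * m) (Pi.single 0 1) / (2 * k) ^ (2 * m) := by gcongr

theorem iSup_tau_rpow_eq {k : ℕ} (hk : 1 ≤ k) :
    ⨆ p : ℕ+, tau k p ^ ((1 : ℝ) / p) = √(2 * k - 1) / k :=
  iSup_rpow_one_div_eq_of_bounds (by positivity) (tau_nonneg k) (tau_le_pow hk)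
    (frequently_atTop.2 fun n => ⟨2 * (n + 1), by omega, pow_div_sq_le_tau hk n.succ_pos⟩)

/-- `sup_p τ_p^{1/p} = √(2k-1)/k`; in particular for `k = 2` it equals `√3/2`. -/
theorem sup_tau_rpow_eq (k : ℕ) (hk : 2 ≤ k) :
    (⨆ p : ℕ+, tau k p ^ ((1 : ℝ) / p)) = Real.sqrt (2 * (k : ℝ) - 1) / k ∧
    (⨆ p : ℕ+, tau 2 p ^ ((1 : ℝ) / p)) = Real.sqrt 3 / 2 := by
  refine ⟨iSup_tau_rpow_eq (by omega), ?_⟩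
  rw [iSup_tau_rpow_eq (by norm_num)]
  norm_num
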